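/- A permutation σ of size n is a minimal permutation with d descents if and only if desc(σ) = d and every ascent of σ at position i (i.e., σ_i < σ_{i+1}) satisfies 2 ≤ i ≤ n−2 and the four consecutive elements σ_{i−1} σ_i σ_{i+1} σ_{i+2} form an occurrence of either the pattern 2143 or the pattern 3142 (i.e., σ_{i−1} > σ_i, σ_i < σ_{i+1}, σ_{i+1} > σ_{i+2}, σ_{i−1} < σ_{i+1}, and σ_i < σ_{i+2}). -/

import Mathlib

/-- `σ` has a descent at (0-based) position `i`, i.e. `σ i > σ (i+1)`. -/
def IsDescentAt {n : ℕ} (σ : Equiv.Perm (Fin n)) (i : ℕ) : Prop :=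
  ∃ h : i + 1 < n, σ ⟨i + 1, h⟩ < σ ⟨i, Nat.lt_of_succ_lt h⟩

/-- The number of descents of `σ`. -/
noncomputable def descNum {n : ℕ} (σ : Equiv.Perm (Fin n)) : ℕ :=
  {i : ℕ | IsDescentAt σ i}.ncard

/-- `π` is a pattern of `σ` (written `π ≺ σ`). -/
def IsPattern {k n : ℕ} (π : Equiv.Perm (Fin k)) (σ : Equiv.Perm (Fin n)) : Prop :=
  ∃ f : Fin k ↪o Fin n, ∀ ℓ m : Fin k, π ℓ < π m → σ (f ℓ) < σ (f m)

/-- `σ` is a minimal permutation with `d` descents: it has `d` descents and every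
pattern `π ≺ σ` with `π ≠ σ` (equivalently, of strictly smaller size) has fewer
than `d` descents. -/
def MinimalWithDescents (d : ℕ) {n : ℕ} (σ : Equiv.Perm (Fin n)) : Prop :=
  descNum σ = d ∧
    ∀ (k : ℕ) (π : Equiv.Perm (Fin k)), k < n → IsPattern π σ → descNum π < d

/-!
Minimality only has to be tested on the patterns obtained by erasing a single entry: every
smaller pattern is a pattern of one of them, and the number of descents can only drop when passing
to a pattern. Erasing the entry at position `p` removes the descents at `p - 1` and `p` and creates
one at `p - 1` exactly when `σ (p + 1) < σ (p - 1)`. Hence the erasure loses a descent iff both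
neighbouring positions are descents, or one of them is and `σ (p - 1) < σ (p + 1)`. Read at
`p = i` and `p = i + 1` around an ascent `i`, this is the `2143`/`3142` condition.
-/

open Equiv

instance {n : ℕ} (σ : Perm (Fin n)) : DecidablePred (IsDescentAt σ) := fun _ => by
  unfold IsDescentAt; infer_instance

theorem Fin.val_succAbove {m : ℕ} (p : Fin (m + 1)) (j : Fin m) :
    (p.succAbove j).val = if j.val < p.val then j.val else j.val + 1 := by
  split_ifs with h
  · rw [Fin.succAbove_of_castSucc_lt p j h, Fin.val_castSucc]
  · rw [Fin.succAbove_of_le_castSucc p j (not_lt.1 h), Fin.val_succ]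

section Descents

variable {n : ℕ} {σ : Perm (Fin n)}

theorem isDescentAt_iff_lt {i : ℕ} {a b : Fin n} (ha : a.val = i) (hb : b.val = i + 1) :
    IsDescentAt σ i ↔ σ b < σ a := by
  obtain ⟨b, hb'⟩ := b
  subst ha hb
  exact ⟨fun ⟨_, h⟩ => h, fun h => ⟨_, h⟩⟩

theorem not_isDescentAt_iff_lt {i : ℕ} {a b : Fin n} (ha : a.val = i) (hb : b.val = i + 1) :
    ¬IsDescentAt σ i ↔ σ a < σ b := by
  rw [isDescentAt_iff_lt ha hb, not_lt, (σ.injective.ne (Fin.ne_of_val_ne (by omega))).le_iff_lt]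

theorem finite_setOf_isDescentAt (σ : Perm (Fin n)) : {i | IsDescentAt σ i}.Finite :=
  (Set.finite_Iio n).subset fun _ ⟨h, _⟩ => by simp only [Set.mem_Iio]; omega

theorem descNum_eq_sum (σ : Perm (Fin n)) :
    descNum σ = ∑ i : Fin n, if IsDescentAt σ i then 1 else 0 := by
  rw [← Finset.card_filter, descNum, ← Set.ncard_coe_finset,
    ← Set.ncard_image_of_injective _ Fin.val_injective]
  congr 1
  ext i
  simp only [Finset.coe_filter, Finset.mem_univ, true_and, Set.mem_image, Set.mem_ofPred_eq]
  exact ⟨fun h => ⟨⟨i, by obtain ⟨_, _⟩ := h; omega⟩, h, rfl⟩, by rintro ⟨j, hj, rfl⟩; exact hj⟩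

theorem exists_isDescentAt_of_lt {a b : Fin n} (hab : a < b) (h : σ b < σ a) :
    ∃ i, a.val ≤ i ∧ i < b.val ∧ IsDescentAt σ i := by
  by_contra! H
  have hmono : ∀ i (hi : i < n), a.val ≤ i → i ≤ b.val → σ a ≤ σ ⟨i, hi⟩ := by
    intro i hi hai hib
    induction i, hai using Nat.le_induction with
    | base => rfl
    | succ i hai ih =>
      exact (ih (by omega) (by omega)).trans
        (not_lt.1 fun hlt => H i hai (by omega) ⟨hi, hlt⟩)
  exact (hmono b b.isLt hab.le le_rfl).not_gt h

end Descents

namespace Equiv.Perm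

variable {m : ℕ} (σ : Perm (Fin (m + 1))) (p : Fin (m + 1))

/-- `σ` with its entry at position `p` deleted, the remaining values standardized to `Fin m`. -/
def eraseIdx : Perm (Fin m) :=
  Equiv.removeNone (((finSuccEquiv' p).symm.trans σ).trans (finSuccEquiv' (σ p)))

theorem succAbove_eraseIdx_apply (j : Fin m) :
    (σ p).succAbove (σ.eraseIdx p j) = σ (p.succAbove j) := by
  obtain ⟨z, hz⟩ := Fin.exists_succAbove_eq (σ.injective.ne (Fin.succAbove_ne p j))
  have hsome :
      ((finSuccEquiv' p).symm.trans σ |>.trans (finSuccEquiv' (σ p))) (some j) = some z := by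
    simp only [Equiv.trans_apply, finSuccEquiv'_symm_some, ← hz, finSuccEquiv'_succAbove]
  have h := Equiv.removeNone_some _ ⟨z, hsome⟩
  rw [hsome, Option.some_inj] at h
  rw [eraseIdx, h, hz]

theorem eraseIdx_lt_eraseIdx_iff {j j' : Fin m} :
    σ.eraseIdx p j < σ.eraseIdx p j' ↔ σ (p.succAbove j) < σ (p.succAbove j') := by
  rw [← succAbove_eraseIdx_apply, ← succAbove_eraseIdx_apply, Fin.succAbove_lt_succAbove_iff]

theorem isPattern_eraseIdx : IsPattern (σ.eraseIdx p) σ :=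
  ⟨Fin.succAboveOrderEmb p, fun _ _ h => (eraseIdx_lt_eraseIdx_iff σ p).1 h⟩

variable {σ p}

theorem isDescentAt_eraseIdx_iff {j : Fin m} (hj : j.val + 1 ≠ p) :
    IsDescentAt (σ.eraseIdx p) j ↔ IsDescentAt σ (p.succAbove j) := by
  by_cases hjm : j.val + 1 < m
  · rw [isDescentAt_iff_lt (a := j) (b := ⟨j + 1, hjm⟩) rfl rfl, eraseIdx_lt_eraseIdx_iff,
      isDescentAt_iff_lt (b := p.succAbove ⟨j + 1, hjm⟩) rfl]
    simp only [Fin.val_succAbove]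
    split_ifs <;> omega
  · refine iff_of_false (fun ⟨h, _⟩ => hjm h) fun ⟨h, _⟩ => ?_
    rw [Fin.val_succAbove] at h
    split_ifs at h <;> omega

theorem isDescentAt_eraseIdx_pred_iff {a b : Fin (m + 1)} (ha : a.val + 1 = p)
    (hb : b.val = p + 1) : IsDescentAt (σ.eraseIdx p) (p - 1) ↔ σ b < σ a := by
  rw [isDescentAt_iff_lt (a := ⟨p - 1, by omega⟩) (b := ⟨p, by omega⟩) rfl (by simp only; omega),
    eraseIdx_lt_eraseIdx_iff]
  have hb' : p.succAbove ⟨p, by omega⟩ = b := by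
    ext; rw [Fin.val_succAbove, if_neg (lt_irrefl _), hb]
  have ha' : p.succAbove ⟨p - 1, by omega⟩ = a := by
    ext; rw [Fin.val_succAbove, if_pos (by simp only; omega)]; simp only; omega
  rw [ha', hb']

theorem not_isDescentAt_eraseIdx_pred_iff {a b : Fin (m + 1)} (ha : a.val + 1 = p)
    (hb : b.val = p + 1) : ¬IsDescentAt (σ.eraseIdx p) (p - 1) ↔ σ a < σ b := by
  rw [isDescentAt_eraseIdx_pred_iff ha hb, not_lt,
    (σ.injective.ne (Fin.ne_of_val_ne (by omega))).le_iff_lt]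

-- The guards `p.val ≠ 0` discard the truncated `0 - 1 = 0`.
theorem descNum_eraseIdx_add (σ : Perm (Fin (m + 1))) (p : Fin (m + 1)) :
    descNum (σ.eraseIdx p) + (if IsDescentAt σ p then 1 else 0) +
        (if p.val ≠ 0 ∧ IsDescentAt σ (p - 1) then 1 else 0) =
      descNum σ + (if p.val ≠ 0 ∧ IsDescentAt (σ.eraseIdx p) (p - 1) then 1 else 0) := by
  rw [descNum_eq_sum, descNum_eq_sum σ, Fin.sum_univ_succAbove _ p]
  have hsum (s : Finset (Fin m)) (hs : ∀ j ∈ s, j.val + 1 ≠ p) :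
      ∑ j ∈ s, (if IsDescentAt (σ.eraseIdx p) j then 1 else 0) =
        ∑ j ∈ s, if IsDescentAt σ (p.succAbove j) then 1 else 0 :=
    Finset.sum_congr rfl fun j hj => if_congr (isDescentAt_eraseIdx_iff (hs j hj)) rfl rfl
  rcases eq_or_ne p.val 0 with hp | hp
  · simp only [hp, hsum _ (fun j _ => by omega), ne_eq, not_true_eq_false, false_and, if_false]
    omega
  · let q : Fin m := ⟨p - 1, by omega⟩
    have hq : p.succAbove q = ⟨p - 1, by omega⟩ := by
      ext; rw [Fin.val_succAbove, if_pos (by simp only [q]; omega)]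
    rw [← Finset.add_sum_erase _ _ (Finset.mem_univ q),
      ← Finset.add_sum_erase _ _ (Finset.mem_univ q),
      hsum _ fun j hj h => Finset.ne_of_mem_erase hj (Fin.ext (by simp only [q]; omega)), hq]
    simp only [hp, ne_eq, not_false_eq_true, true_and, q]
    omega

-- No guards are needed here: at `p = 0` the right side reduces to `IsDescentAt σ 0`.
theorem descNum_eraseIdx_lt_iff :
    descNum (σ.eraseIdx p) < descNum σ ↔
      IsDescentAt σ (p - 1) ∧ IsDescentAt σ p ∨
        (IsDescentAt σ (p - 1) ∨ IsDescentAt σ p) ∧ ¬IsDescentAt (σ.eraseIdx p) (p - 1) := by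
  have h := descNum_eraseIdx_add σ p
  rcases eq_or_ne p.val 0 with hp | hp
  · simp only [hp, ne_eq, not_true_eq_false, false_and, if_false, zero_tsub] at h ⊢
    split_ifs at h <;> simp_all
    omega
  · simp only [hp, ne_eq, not_false_eq_true, true_and] at h
    split_ifs at h <;> simp_all <;> omega

end Equiv.Perm

open Equiv.Perm

theorem IsPattern.exists_eraseIdx {k m : ℕ} {π : Perm (Fin k)} {σ : Perm (Fin (m + 1))}
    (h : IsPattern π σ) (hk : k < m + 1) : ∃ p, IsPattern π (σ.eraseIdx p) := by
  obtain ⟨f, hf⟩ := h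
  obtain ⟨p, hp⟩ : ∃ p, ∀ ℓ, f ℓ ≠ p := by
    by_contra! H
    exact hk.not_ge (by simpa using Fintype.card_le_of_surjective f H)
  choose g hg using fun ℓ => Fin.exists_succAbove_eq (hp ℓ)
  have hg_mono : StrictMono g := fun a b hab =>
    Fin.succAbove_lt_succAbove_iff.1 (by rw [hg, hg]; exact f.strictMono hab)
  refine ⟨p, OrderEmbedding.ofStrictMono g hg_mono, fun ℓ ℓ' h => ?_⟩
  simpa only [OrderEmbedding.coe_ofStrictMono, eraseIdx_lt_eraseIdx_iff, hg] using hf ℓ ℓ' h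

theorem IsPattern.descNum_le {k n : ℕ} {π : Perm (Fin k)} {σ : Perm (Fin n)}
    (h : IsPattern π σ) : descNum π ≤ descNum σ := by
  obtain ⟨f, hf⟩ := h
  have hF : ∀ j, ∃ i, IsDescentAt π j → IsDescentAt σ i ∧
      ∀ hj : j + 1 < k, (f ⟨j, by omega⟩).val ≤ i ∧ i < f ⟨j + 1, hj⟩ := by
    intro j
    by_cases hπ : IsDescentAt π j
    · obtain ⟨hj, hlt⟩ := hπ
      obtain ⟨i, h₁, h₂, hi⟩ :=
        exists_isDescentAt_of_lt (f.strictMono (Fin.mk_lt_mk.2 j.lt_succ_self)) (hf _ _ hlt)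
      exact ⟨i, fun _ => ⟨hi, fun _ => ⟨h₁, h₂⟩⟩⟩
    · exact ⟨0, fun h => (hπ h).elim⟩
  choose F hF using hF
  have hF_mono : StrictMonoOn F {j | IsDescentAt π j} := by
    intro j hjD j' hj'D hjj'
    obtain ⟨hj, -⟩ := id hjD
    obtain ⟨hj', -⟩ := id hj'D
    calc F j < f ⟨j + 1, hj⟩ := ((hF j hjD).2 hj).2
      _ ≤ f ⟨j', by omega⟩ := f.monotone (Fin.mk_le_mk.2 hjj')
      _ ≤ F j' := ((hF j' hj'D).2 hj').1
  exact Set.ncard_le_ncard_of_injOn F (fun j hj => (hF j hj).1) hF_mono.injOn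
    (finite_setOf_isDescentAt σ)

theorem minimalWithDescents_iff_forall_eraseIdx {m d : ℕ} (σ : Perm (Fin (m + 1))) :
    MinimalWithDescents d σ ↔ descNum σ = d ∧ ∀ p, descNum (σ.eraseIdx p) < d := by
  refine and_congr_right fun _ => ⟨fun h p => h m _ m.lt_succ_self (σ.isPattern_eraseIdx p), ?_⟩
  intro h k π hk hπ
  obtain ⟨p, hp⟩ := hπ.exists_eraseIdx hk
  exact hp.descNum_le.trans_lt (h p)

/-- Positions are 0-based: `1 ≤ i` and `i + 2 < n` are the paper's `2 ≤ i ≤ n - 2`. -/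
def AscentsForm2143Or3142 {n : ℕ} (σ : Perm (Fin n)) : Prop :=
  ∀ (i : ℕ) (hi : i + 1 < n),
    σ ⟨i, Nat.lt_of_succ_lt hi⟩ < σ ⟨i + 1, hi⟩ →
    ∃ (h1 : 1 ≤ i) (h2 : i + 2 < n),
      σ ⟨i, Nat.lt_of_succ_lt hi⟩ < σ ⟨i - 1, by omega⟩ ∧
      σ ⟨i + 2, h2⟩ < σ ⟨i + 1, hi⟩ ∧
      σ ⟨i - 1, by omega⟩ < σ ⟨i + 1, hi⟩ ∧
      σ ⟨i, Nat.lt_of_succ_lt hi⟩ < σ ⟨i + 2, h2⟩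

theorem ascentsForm2143Or3142_of_forall_descNum_eraseIdx_lt {m : ℕ} {σ : Perm (Fin (m + 1))}
    (h : ∀ p, descNum (σ.eraseIdx p) < descNum σ) : AscentsForm2143Or3142 σ := by
  intro i hi hasc
  have hi' : ¬IsDescentAt σ i := (not_isDescentAt_iff_lt rfl rfl).2 hasc
  obtain ⟨hprev, hnew⟩ : IsDescentAt σ (i - 1) ∧
      ¬IsDescentAt (σ.eraseIdx ⟨i, by omega⟩) (i - 1) := by
    simpa [hi'] using descNum_eraseIdx_lt_iff.1 (h ⟨i, by omega⟩)
  obtain ⟨hnext, hnew'⟩ : IsDescentAt σ (i + 1) ∧ ¬IsDescentAt (σ.eraseIdx ⟨i + 1, hi⟩) i := by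
    simpa [hi'] using descNum_eraseIdx_lt_iff.1 (h ⟨i + 1, hi⟩)
  have h1 : 1 ≤ i := by
    by_contra h0
    exact hi' (by rwa [show i - 1 = i by omega] at hprev)
  exact ⟨h1, hnext.1, (isDescentAt_iff_lt rfl (by simp only; omega)).1 hprev,
    (isDescentAt_iff_lt rfl rfl).1 hnext,
    (not_isDescentAt_eraseIdx_pred_iff (by simp only; omega) rfl).1 hnew,
    (not_isDescentAt_eraseIdx_pred_iff rfl rfl).1 hnew'⟩

theorem AscentsForm2143Or3142.descNum_eraseIdx_lt {m : ℕ} {σ : Perm (Fin (m + 1))}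
    (h : AscentsForm2143Or3142 σ) (hm : 1 ≤ m) (p : Fin (m + 1)) :
    descNum (σ.eraseIdx p) < descNum σ := by
  rw [descNum_eraseIdx_lt_iff]
  by_cases hprev : IsDescentAt σ (p - 1)
  · by_cases hp : IsDescentAt σ p
    · exact Or.inl ⟨hprev, hp⟩
    refine Or.inr ⟨Or.inl hprev, ?_⟩
    by_cases hpm : p.val + 1 < m + 1
    · obtain ⟨_, _, -, -, hlt, -⟩ := h p hpm ((not_isDescentAt_iff_lt rfl rfl).1 hp)
      exact (not_isDescentAt_eraseIdx_pred_iff (by simp only; omega) rfl).2 hlt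
    · rintro ⟨hlt, -⟩
      omega
  · obtain ⟨h1, h2, -, hnext, -, hlt⟩ :=
      h (p - 1) (by omega) ((not_isDescentAt_iff_lt rfl rfl).1 hprev)
    exact Or.inr ⟨Or.inr ((isDescentAt_iff_lt (by simp only; omega) (by simp only; omega)).2 hnext),
      (not_isDescentAt_eraseIdx_pred_iff (by simp only; omega) (by simp only; omega)).2 hlt⟩

/-- Characterization of minimal permutations with `d` descents (`d ≥ 1`): `σ` is minimal
with `d` descents iff it has exactly `d` descents and around every ascent (0-based
position `i`, so `1 ≤ i` and `i + 2 < n` is the paper's `2 ≤ i ≤ n - 2`), the four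
consecutive elements `σ (i-1) σ i σ (i+1) σ (i+2)` form an occurrence of `2143` or
`3142`, i.e. satisfy the five inequalities below. -/
theorem minimal_iff_ascents_form_2143_or_3142 {n d : ℕ} (hd : 1 ≤ d)
    (σ : Equiv.Perm (Fin n)) :
    MinimalWithDescents d σ ↔
      descNum σ = d ∧
        ∀ (i : ℕ) (hi : i + 1 < n),
          σ ⟨i, Nat.lt_of_succ_lt hi⟩ < σ ⟨i + 1, hi⟩ →
          ∃ (h1 : 1 ≤ i) (h2 : i + 2 < n),
            σ ⟨i, Nat.lt_of_succ_lt hi⟩ < σ ⟨i - 1, by omega⟩ ∧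
            σ ⟨i + 2, h2⟩ < σ ⟨i + 1, hi⟩ ∧
            σ ⟨i - 1, by omega⟩ < σ ⟨i + 1, hi⟩ ∧
            σ ⟨i, Nat.lt_of_succ_lt hi⟩ < σ ⟨i + 2, h2⟩ := by
  change _ ↔ descNum σ = d ∧ AscentsForm2143Or3142 σ
  match n, σ with
  | 0, σ =>
    exact and_congr_right fun _ => iff_of_true (fun _ _ hk => (Nat.not_lt_zero _ hk).elim)
      fun _ hi => (Nat.not_lt_zero _ hi).elim
  | 1, σ =>
    have h0 : descNum σ = 0 := by
      rw [descNum, Set.eq_empty_of_forall_notMem (s := {i | IsDescentAt σ i})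
        fun i (⟨h, _⟩ : IsDescentAt σ i) => by omega, Set.ncard_empty]
    constructor <;> rintro ⟨h, -⟩ <;> omega
  | m + 2, σ =>
    rw [minimalWithDescents_iff_forall_eraseIdx]
    refine and_congr_right fun hσ => ?_
    subst hσ
    exact ⟨ascentsForm2143Or3142_of_forall_descNum_eraseIdx_lt,
      fun h => h.descNum_eraseIdx_lt (Nat.le_add_left 1 m)⟩
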